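/- Fix r ≥ 1, m ≥ 1 and p_0,…,p_{r−1} ∈ ℕ with p_0 + ⋯ + p_{r−1} = m, and let c = {v ∈ I(r,2m) : |v| is fixed-point-free and #{i : z_i(v) = j} = 2p_j for every j ∈ {0,…,r−1}} (the S_{2m}-conjugacy class of absolute involutions of G(r,2m) with no fixed points and prescribed color multiplicities). Then for every g ∈ G(r,2m): Σ_{v ∈ c, |g|v|g|⁻¹ = v} ζ_r^{⟨g,v⟩}·(−1)^{inv_v(g)} = (−1)^{inv(|g|)} · Σ_{v ∈ c, |g|v|g|⁻¹ = v} ζ_r^{⟨g,v⟩}. (This is the character identity expressing that the representation ϱ of G(r,2m) on the span of {C_v : v ∈ c} is isomorphic to the tensor product of the linear character g ↦ (−1)^{inv(|g|)} with the representation φ on the same span.) -/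

import Mathlib

/-! For every `v` in the sum, `|g|` commutes with the fixed-point-free involution `|v|`, so it
permutes the pairs `{i, |v| i}`, and `inv_v(g)` counts the pairs whose order `|g|` reverses.
Composing `|g|` with the transposition of one reversed pair changes the sign and removes that
reversal. Once no pair is reversed, `|g|` preserves the set of smaller elements of the pairs, and
`|v|` conjugates its restriction there to its restriction to the complement, so it is even. Hence
`(-1)^{inv_v(g)} = sign |g| = (-1)^{inv(|g|)}` term by term. -/

noncomputable section

/-- The wreath product `G(r,n) = C_r ≀ S_n`, realized as pairs of a color vector
`z : Fin n → ZMod r` and a permutation `p` of `Fin n`. -/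
@[ext] structure WreathG (r n : ℕ) where
  z : Fin n → ZMod r
  p : Equiv.Perm (Fin n)

namespace WreathG

variable {r n : ℕ}

instance : One (WreathG r n) := ⟨⟨0, 1⟩⟩
instance : Mul (WreathG r n) := ⟨fun g h => ⟨g.z + h.z ∘ g.p.symm, g.p * h.p⟩⟩
instance : Inv (WreathG r n) := ⟨fun g => ⟨-(g.z ∘ g.p), g.p⁻¹⟩⟩

@[simp] theorem one_z : (1 : WreathG r n).z = 0 := rfl
@[simp] theorem one_p : (1 : WreathG r n).p = 1 := rfl
@[simp] theorem mul_z (a b : WreathG r n) : (a * b).z = a.z + b.z ∘ a.p.symm := rfl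
@[simp] theorem mul_p (a b : WreathG r n) : (a * b).p = a.p * b.p := rfl
@[simp] theorem inv_z (a : WreathG r n) : (a⁻¹).z = -(a.z ∘ a.p) := rfl
@[simp] theorem inv_p (a : WreathG r n) : (a⁻¹).p = a.p⁻¹ := rfl

instance : Group (WreathG r n) :=
  Group.ofLeftAxioms
    (fun a b c => by
      refine WreathG.ext ?_ (mul_assoc a.p b.p c.p)
      funext x
      show (a.z x + b.z (a.p.symm x)) + c.z ((a.p * b.p).symm x)
          = a.z x + (b.z (a.p.symm x) + c.z (b.p.symm (a.p.symm x)))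
      have h : (a.p * b.p).symm x = b.p.symm (a.p.symm x) := rfl
      rw [h, add_assoc])
    (fun a => by
      refine WreathG.ext ?_ (one_mul a.p)
      funext x
      show 0 + a.z ((1 : Equiv.Perm (Fin n)).symm x) = a.z x
      simp
      rfl)
    (fun a => by
      refine WreathG.ext ?_ (inv_mul_cancel a.p)
      funext x
      show -(a.z (a.p x)) + a.z ((a.p⁻¹).symm x) = 0
      have h : (a.p⁻¹).symm x = a.p x := rfl
      rw [h, neg_add_cancel])

/-- An absolute involution of `G(r,n)`: `|v|² = 1` and `z ∘ |v| = z`. -/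
def IsAbsInv (v : WreathG r n) : Prop := v.p ^ 2 = 1 ∧ v.z ∘ v.p = v.z

instance (v : WreathG r n) : Decidable (IsAbsInv v) :=
  inferInstanceAs (Decidable (_ ∧ _))

/-- Absolute conjugation `τ·(z,σ)·τ⁻¹ = (z ∘ τ⁻¹, τστ⁻¹)`. -/
def aconj (τ : Equiv.Perm (Fin n)) (v : WreathG r n) : WreathG r n :=
  ⟨v.z ∘ τ.symm, τ * v.p * τ⁻¹⟩

theorem IsAbsInv.aconj {v : WreathG r n} (h : IsAbsInv v) (τ : Equiv.Perm (Fin n)) :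
    IsAbsInv (WreathG.aconj τ v) := by
  obtain ⟨h1, h2⟩ := h
  constructor
  · show (τ * v.p * τ⁻¹) ^ 2 = 1
    have key : (τ * v.p * τ⁻¹) * (τ * v.p * τ⁻¹) = τ * (v.p * v.p) * τ⁻¹ := by
      simp [mul_assoc]
    rw [sq, key, ← sq, h1, mul_one, mul_inv_cancel]
  · funext x
    have := congrFun h2 (τ.symm x)
    simpa [WreathG.aconj, Function.comp] using this

/-- `⟨g,v⟩ = ∑ i z_i(g)·z_i(v) ∈ ZMod r`. -/
def pairing (g v : WreathG r n) : ZMod r := ∑ i, g.z i * v.z i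

/-- `inv_v(g)`: the number of pairs `i < j` with `|v|(i) = j` and `|g|(i) > |g|(j)`. -/
def invv (v g : WreathG r n) : ℕ :=
  Nat.card {q : Fin n × Fin n // q.1 < q.2 ∧ v.p q.1 = q.2 ∧ g.p q.2 < g.p q.1}

/-- The number of inversions of a permutation. -/
def invPerm (σ : Equiv.Perm (Fin n)) : ℕ :=
  Nat.card {q : Fin n × Fin n // q.1 < q.2 ∧ σ q.2 < σ q.1}

/-- `fix_i(v)`: the number of `j` with `|v|(j) = j` and `z_j(v) = i`. -/
def fixc (v : WreathG r n) (i : ZMod r) : ℕ :=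
  Nat.card {j : Fin n // v.p j = j ∧ v.z j = i}

/-- `pair_i(v)`: the number of pairs `j < k` with `|v|(j) = k` and `z_j(v) = z_k(v) = i`. -/
def pairc (v : WreathG r n) (i : ZMod r) : ℕ :=
  Nat.card {q : Fin n × Fin n // q.1 < q.2 ∧ v.p q.1 = q.2 ∧ v.z q.1 = i ∧ v.z q.2 = i}

instance : DecidableEq (WreathG r n) := fun a b =>
  decidable_of_iff (a.z = b.z ∧ a.p = b.p)
    (by constructor
        · rintro ⟨h1, h2⟩; exact WreathG.ext h1 h2
        · rintro rfl; exact ⟨rfl, rfl⟩)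

instance [NeZero r] : Fintype (WreathG r n) :=
  Fintype.ofEquiv ((Fin n → ZMod r) × Equiv.Perm (Fin n))
    { toFun := fun x => ⟨x.1, x.2⟩
      invFun := fun g => (g.z, g.p)
      left_inv := fun _ => rfl
      right_inv := fun _ => rfl }

end WreathG

/-- The set `I(r,n)` of absolute involutions, as a subtype. -/
abbrev AbsInv (r n : ℕ) := {v : WreathG r n // WreathG.IsAbsInv v}

/-- The model space `M`: the complex vector space with basis `{C_v : v ∈ I(r,n)}`. -/
abbrev ModelSpace (r n : ℕ) := AbsInv r n →₀ ℂ

/-- `ζ_r = exp(2πi/r)`. -/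
def zetaC (r : ℕ) : ℂ := Complex.exp (2 * Real.pi * Complex.I / r)

/-- `ζ_r` raised to an exponent in `ZMod r` (well defined since `ζ_r^r = 1`). -/
def zetaPow (r : ℕ) (a : ZMod r) : ℂ := zetaC r ^ a.val

/-- The Gelfand model operator `ϱ(g) C_v = ζ_r^{⟨g,v⟩} (−1)^{inv_v(g)} C_{|g|v|g|⁻¹}`. -/
def modelRho {r n : ℕ} (g : WreathG r n) :
    ModelSpace r n →ₗ[ℂ] ModelSpace r n :=
  Finsupp.lsum ℂ fun v =>
    ((zetaPow r (WreathG.pairing g v.1) * (-1 : ℂ) ^ WreathG.invv v.1 g) •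
      Finsupp.lsingle (⟨WreathG.aconj g.p v.1, v.2.aconj g.p⟩ : AbsInv r n))

/-- The auxiliary operator `φ(g) C_v = ζ_r^{⟨g,v⟩} C_{|g|v|g|⁻¹}`. -/
def modelPhi {r n : ℕ} (g : WreathG r n) :
    ModelSpace r n →ₗ[ℂ] ModelSpace r n :=
  Finsupp.lsum ℂ fun v =>
    ((zetaPow r (WreathG.pairing g v.1)) •
      Finsupp.lsingle (⟨WreathG.aconj g.p v.1, v.2.aconj g.p⟩ : AbsInv r n))

namespace Equiv.Perm

theorem commute_swap_apply_self {α : Type*} [DecidableEq α] {τ : Perm α}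
    (hτ : Function.Involutive τ) (a : α) : Commute (swap a (τ a)) τ := by
  have h := swap_apply_apply τ a (τ a)
  rw [hτ a, swap_comm, eq_mul_inv_iff_mul_eq] at h
  exact h

variable {α : Type*} [LinearOrder α] [Fintype α]

def flippedPairs (τ σ : Perm α) : Finset α :=
  Finset.univ.filter fun i => i < τ i ∧ σ (τ i) < σ i

variable {τ σ : Perm α}

theorem mem_flippedPairs {i : α} : i ∈ flippedPairs τ σ ↔ i < τ i ∧ σ (τ i) < σ i := by
  simp [flippedPairs]

theorem sign_eq_one_of_flippedPairs_eq_empty (hτ : Function.Involutive τ) (hfpf : ∀ x, τ x ≠ x)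
    (hc : Commute σ τ) (hσ : flippedPairs τ σ = ∅) : sign σ = 1 := by
  have hστ x : σ (τ x) = τ (σ x) := DFunLike.congr_fun hc.eq x
  have hlt_of_not_lt {x} (h : ¬ x < τ x) : τ x < x := (not_lt.mp h).lt_of_ne (hfpf x)
  have hkeep {x} (h : x < τ x) : σ x < σ (τ x) := by
    refine (le_of_not_gt fun h' => ?_).lt_of_ne (σ.injective.ne (hfpf x).symm)
    simpa [hσ] using (mem_flippedPairs (σ := σ)).mpr ⟨h, h'⟩
  have hpres x : σ x < τ (σ x) ↔ x < τ x := by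
    refine ⟨fun h => by_contra fun hx => ?_, fun h => hστ x ▸ hkeep h⟩
    have := hkeep (x := τ x) (by rw [hτ x]; exact hlt_of_not_lt hx)
    rw [hτ x, hστ] at this
    exact lt_asymm h this
  let P : α → Prop := fun x => x < τ x
  let swapHalves : {x // P x} ≃ {x // ¬ P x} :=
    { toFun := fun x => ⟨τ x, by simp only [P, hτ x.1, not_lt]; exact x.2.le⟩
      invFun := fun x => ⟨τ x, by simp only [P, hτ x.1]; exact hlt_of_not_lt x.2⟩
      left_inv := fun x => Subtype.ext (hτ x)
      right_inv := fun x => Subtype.ext (hτ x) }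
  have hsplit : σ = (σ.subtypePerm (p := P) hpres).subtypeCongr
      (σ.subtypePerm (p := fun x => ¬ P x) fun x => (hpres x).not) := by
    ext x; by_cases hx : P x <;> simp [hx]
  have hhalves : sign (σ.subtypePerm (p := P) hpres)
      = sign (σ.subtypePerm (p := fun x => ¬ P x) fun x => (hpres x).not) :=
    sign_eq_sign_of_equiv _ _ swapHalves fun x => Subtype.ext (hστ x).symm
  rw [hsplit, sign_subtypeCongr, ← hhalves, Int.units_mul_self]

theorem flippedPairs_mul_swap (hτ : Function.Involutive τ) {a : α}
    (ha : a ∈ flippedPairs τ σ) :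
    flippedPairs τ (σ * swap a (τ a)) = (flippedPairs τ σ).erase a := by
  rw [mem_flippedPairs] at ha
  ext i
  simp only [mem_flippedPairs, Finset.mem_erase, mul_apply]
  by_cases hia : i = a
  · subst hia
    simp [lt_asymm ha.2]
  by_cases hib : i = τ a
  · subst hib
    simp [hτ a, lt_asymm ha.1]
  have h1 : τ i ≠ a := fun h => hib (by rw [← h, hτ])
  have h2 : τ i ≠ τ a := fun h => hia (τ.injective h)
  simp [swap_apply_of_ne_of_ne, hia, hib, h1, h2]

theorem sign_eq_neg_one_pow_card_flippedPairs (hτ : Function.Involutive τ)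
    (hfpf : ∀ x, τ x ≠ x) (hc : Commute σ τ) :
    sign σ = (-1) ^ (flippedPairs τ σ).card := by
  obtain ⟨k, hk⟩ : ∃ k, (flippedPairs τ σ).card = k := ⟨_, rfl⟩
  rw [hk]
  induction k generalizing σ with
  | zero =>
    exact sign_eq_one_of_flippedPairs_eq_empty hτ hfpf hc (Finset.card_eq_zero.mp hk)
  | succ k ih =>
    obtain ⟨a, ha⟩ : (flippedPairs τ σ).Nonempty := Finset.card_pos.mp (by omega)
    have hfewer := ih (hc.mul_left (commute_swap_apply_self hτ a))
      (by rw [flippedPairs_mul_swap hτ ha, Finset.card_erase_of_mem ha, hk, Nat.add_sub_cancel])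
    rw [sign_mul, sign_swap (hfpf a).symm] at hfewer
    rw [pow_succ, ← hfewer, mul_neg_one, mul_neg_one, neg_neg]

theorem sign_eq_neg_one_pow_card_inversions {n : ℕ} (σ : Perm (Fin n)) :
    sign σ = (-1) ^ (Finset.univ.filter fun q : Fin n × Fin n =>
      q.1 < q.2 ∧ σ q.2 < σ q.1).card := by
  rw [sign_eq_prod_prod_Iio, ← Finset.prod_const, Finset.prod_filter,
    Fintype.prod_prod_type_right]
  refine Finset.prod_congr rfl fun j _ => ?_
  rw [← Finset.filter_gt_eq_Iio, Finset.prod_filter]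
  refine Finset.prod_congr rfl fun i _ => ?_
  by_cases hij : i < j
  · rcases lt_or_gt_of_ne (σ.injective.ne hij.ne) with hσ | hσ <;> simp [hij, hσ, lt_asymm hσ]
  · simp [hij]

end Equiv.Perm

namespace WreathG

variable {r n : ℕ}

theorem invPerm_eq_card (σ : Equiv.Perm (Fin n)) :
    invPerm σ = (Finset.univ.filter fun q : Fin n × Fin n => q.1 < q.2 ∧ σ q.2 < σ q.1).card := by
  rw [invPerm, Nat.card_eq_fintype_card, Fintype.card_subtype]

theorem invv_eq_card_flippedPairs (v g : WreathG r n) :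
    invv v g = (Equiv.Perm.flippedPairs v.p g.p).card := by
  let pairsByFirst : {q : Fin n × Fin n // q.1 < q.2 ∧ v.p q.1 = q.2 ∧ g.p q.2 < g.p q.1} ≃
      {i // i < v.p i ∧ g.p (v.p i) < g.p i} :=
    { toFun := fun q => ⟨q.1.1, by obtain ⟨hi, hj, hg⟩ := q.2; rw [hj]; exact ⟨hi, hg⟩⟩
      invFun := fun i => ⟨(i, v.p i), i.2.1, rfl, i.2.2⟩
      left_inv := fun q => Subtype.ext (Prod.ext rfl q.2.2.1)
      right_inv := fun _ => rfl }
  rw [invv, Nat.card_congr pairsByFirst, Nat.card_eq_fintype_card, Fintype.card_subtype]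
  rfl

theorem neg_one_pow_invv_eq_neg_one_pow_invPerm {v g : WreathG r n} (hv : IsAbsInv v)
    (hfpf : ∀ j, v.p j ≠ j) (hg : aconj g.p v = v) :
    (-1 : ℂ) ^ invv v g = (-1) ^ invPerm g.p := by
  have hinv : Function.Involutive v.p := fun x => by
    simpa [sq] using DFunLike.congr_fun hv.1 x
  have hc : Commute g.p v.p := mul_inv_eq_iff_eq_mul.mp (congrArg p hg)
  have hsign : (-1 : ℤˣ) ^ invv v g = (-1) ^ invPerm g.p := by
    rw [invv_eq_card_flippedPairs, invPerm_eq_card,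
      ← Equiv.Perm.sign_eq_neg_one_pow_card_flippedPairs hinv hfpf hc,
      Equiv.Perm.sign_eq_neg_one_pow_card_inversions]
  simpa using congrArg (fun u : ℤˣ => ((u : ℤ) : ℂ)) hsign

end WreathG

theorem rho_char_eq_sign_mul_phi_char_general (r m : ℕ) [NeZero r]
    (p : Fin r → ℕ) (g : WreathG r (2 * m)) :
    ∑ v ∈ Finset.univ.filter (fun v : AbsInv r (2 * m) =>
        (∀ j, v.1.p j ≠ j) ∧
        (∀ j : Fin r,
          (Finset.univ.filter fun i => v.1.z i = (j.val : ZMod r)).card = 2 * p j) ∧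
        WreathG.aconj g.p v.1 = v.1),
      zetaPow r (WreathG.pairing g v.1) * (-1 : ℂ) ^ WreathG.invv v.1 g
    = (-1 : ℂ) ^ WreathG.invPerm g.p *
      ∑ v ∈ Finset.univ.filter (fun v : AbsInv r (2 * m) =>
        (∀ j, v.1.p j ≠ j) ∧
        (∀ j : Fin r,
          (Finset.univ.filter fun i => v.1.z i = (j.val : ZMod r)).card = 2 * p j) ∧
        WreathG.aconj g.p v.1 = v.1),
      zetaPow r (WreathG.pairing g v.1) := by
  rw [Finset.mul_sum]
  refine Finset.sum_congr rfl fun v hv => ?_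
  obtain ⟨hfpf, -, hg⟩ := (Finset.mem_filter.mp hv).2
  rw [WreathG.neg_one_pow_invv_eq_neg_one_pow_invPerm v.2 hfpf hg, mul_comm]

/-- On the `S_{2m}`-conjugacy class of fixed-point-free absolute
involutions of `G(r,2m)` with `2p_j` entries of color `j` for each `j`, the character of
`ϱ` equals `(−1)^{inv(|g|)}` times the character of `φ`. -/
theorem rho_char_eq_sign_mul_phi_char (r m : ℕ) [NeZero r] (hm : 1 ≤ m)
    (p : Fin r → ℕ) (hp : ∑ j, p j = m) (g : WreathG r (2 * m)) :
    ∑ v ∈ Finset.univ.filter (fun v : AbsInv r (2 * m) =>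
        (∀ j, v.1.p j ≠ j) ∧
        (∀ j : Fin r,
          (Finset.univ.filter fun i => v.1.z i = (j.val : ZMod r)).card = 2 * p j) ∧
        WreathG.aconj g.p v.1 = v.1),
      zetaPow r (WreathG.pairing g v.1) * (-1 : ℂ) ^ WreathG.invv v.1 g
    = (-1 : ℂ) ^ WreathG.invPerm g.p *
      ∑ v ∈ Finset.univ.filter (fun v : AbsInv r (2 * m) =>
        (∀ j, v.1.p j ≠ j) ∧
        (∀ j : Fin r,
          (Finset.univ.filter fun i => v.1.z i = (j.val : ZMod r)).card = 2 * p j) ∧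
        WreathG.aconj g.p v.1 = v.1),
      zetaPow r (WreathG.pairing g v.1) :=
  rho_char_eq_sign_mul_phi_char_general r m p g
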